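/- arXiv:1511.07403 — 4 statements merged into one kernel-verified Lean document; each statement's English description precedes it below -/
import Mathlib

section
/- Let P' = P ∪ {x} be a finite poset obtained from a finite poset P by adjoining a new maximal element x with a unique predecessor y in P. Then every linearization of P' restricts (after collapsing) to a linearization of P, and each k-linearization f of P with f(y) = p gives rise to exactly (k - p) k-linearizations of P' and exactly (k - p + 1) (k+1)-linearizations of P'. -/
/-- A `k`-linearization of a finite poset: a surjective strictly order-preserving map
onto `Fin k` (representing `{1,…,k}`). -/
def IsLinearization {P : Type*} [PartialOrder P] {k : ℕ} (f : P → Fin k) : Prop :=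
  Function.Surjective f ∧ ∀ x y : P, x < y → f x < f y

lemma card_fin_gt (n c : ℕ) : Nat.card {v : Fin n // c < (v : ℕ)} = n - (c + 1) := by
  have e : {v : Fin n // c < (v : ℕ)} ≃ Fin (n - (c + 1)) :=
    { toFun := fun v => ⟨v.1.1 - (c + 1), by have := v.1.isLt; have := v.2; omega⟩
      invFun := fun i => ⟨⟨i.1 + (c + 1), by have := i.isLt; omega⟩, by
        simp only [Fin.val_mk]; omega⟩
      left_inv := fun v => by
        have := v.2
        apply Subtype.ext; apply Fin.ext; simp; omega
      right_inv := fun i => by apply Fin.ext; simp }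
  rw [Nat.card_congr e, Nat.card_eq_fintype_card, Fintype.card_fin]

open scoped Classical in
/-- Extend `f : P → Fin k` to `Q` by sending the extra point `x` to `v`. -/
noncomputable def glueFun {Q : Type*} (x : Q) {k : ℕ} (f : {z : Q // z ≠ x} → Fin k)
    (v : Fin k) : Q → Fin k :=
  fun z => if h : z = x then v else f ⟨z, h⟩

lemma glueFun_x {Q : Type*} (x : Q) {k : ℕ} (f : {z : Q // z ≠ x} → Fin k) (v : Fin k) :
    glueFun x f v x = v := by rw [glueFun]; exact dif_pos rfl

lemma glueFun_ne {Q : Type*} (x : Q) {k : ℕ} (f : {z : Q // z ≠ x} → Fin k) (v : Fin k)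
    {z : Q} (h : z ≠ x) : glueFun x f v z = f ⟨z, h⟩ := by rw [glueFun]; exact dif_neg h

open scoped Classical in
/-- Extend `f : P → Fin k` to a map `Q → Fin (k+1)` in which `x` occupies the level `v`
alone, shifting the levels of `f` that are `≥ v` up by one. -/
noncomputable def expandFun {Q : Type*} (x : Q) {k : ℕ} (f : {z : Q // z ≠ x} → Fin k)
    (v : Fin (k + 1)) : Q → Fin (k + 1) :=
  fun z => if h : z = x then v else
    if (f ⟨z, h⟩ : ℕ) < (v : ℕ) then ⟨(f ⟨z, h⟩ : ℕ), by have := (f ⟨z, h⟩).isLt; omega⟩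
    else ⟨(f ⟨z, h⟩ : ℕ) + 1, by have := (f ⟨z, h⟩).isLt; omega⟩

lemma expandFun_x {Q : Type*} (x : Q) {k : ℕ} (f : {z : Q // z ≠ x} → Fin k)
    (v : Fin (k + 1)) : expandFun x f v x = v := by rw [expandFun]; exact dif_pos rfl

lemma expandFun_val {Q : Type*} (x : Q) {k : ℕ} (f : {z : Q // z ≠ x} → Fin k)
    (v : Fin (k + 1)) {z : Q} (h : z ≠ x) :
    (expandFun x f v z : ℕ) =
      if (f ⟨z, h⟩ : ℕ) < (v : ℕ) then (f ⟨z, h⟩ : ℕ) else (f ⟨z, h⟩ : ℕ) + 1 := by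
  rw [expandFun, dif_neg h]
  split_ifs <;> rfl

/-- Let `Q = P' = P ∪ {x}` be a finite poset obtained from `P := {z // z ≠ x}` by adjoining a
new maximal element `x` whose strict lower set is exactly the lower set of an element `y` of `P`
(so `y` is the unique predecessor of `x`).  Then:
(1) every linearization of `Q` restricts (after collapsing the level of `x`, if `x` sits alone
on its level) to a linearization of `P`; and
(2) every `k`-linearization `f` of `P` with `f(y) = p` (that is, `p = (f y).val + 1` in
one-based counting) gives rise to exactly `k − p` `k`-linearizations of `Q` (those restricting
to `f`), and exactly `k − p + 1` `(k+1)`-linearizations of `Q` (those in which `x` occupies a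
level of its own and whose collapse is `f`). -/
theorem linearizations_of_one_point_extension {Q : Type*} [Fintype Q] [PartialOrder Q]
    (x y : Q) (hxy : y < x) (hmax : ∀ z : Q, ¬ x < z)
    (hbelow : ∀ z : Q, z < x ↔ z ≤ y) :
    (∀ (k : ℕ) (g : Q → Fin k), IsLinearization g →
      ((∃ a : {z : Q // z ≠ x}, g a.1 = g x) →
          IsLinearization (fun a : {z : Q // z ≠ x} => g a.1)) ∧
      ((∀ a : {z : Q // z ≠ x}, g a.1 ≠ g x) →
          ∃ f : {z : Q // z ≠ x} → Fin (k - 1), IsLinearization f ∧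
            ∀ a : {z : Q // z ≠ x},
              (f a : ℕ) = if (g a.1 : ℕ) < (g x : ℕ) then (g a.1 : ℕ) else (g a.1 : ℕ) - 1))
    ∧
    (∀ (k : ℕ) (f : {z : Q // z ≠ x} → Fin k), IsLinearization f →
      Nat.card {g : Q → Fin k // IsLinearization g ∧ ∀ a : {z : Q // z ≠ x}, g a.1 = f a} =
          k - ((f ⟨y, hxy.ne⟩ : ℕ) + 1)
      ∧
      Nat.card {g : Q → Fin (k + 1) // IsLinearization g ∧
          (∀ a : {z : Q // z ≠ x}, g a.1 ≠ g x) ∧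
          ∀ a : {z : Q // z ≠ x},
            (f a : ℕ) = if (g a.1 : ℕ) < (g x : ℕ) then (g a.1 : ℕ) else (g a.1 : ℕ) - 1} =
        k - ((f ⟨y, hxy.ne⟩ : ℕ) + 1) + 1) := by
  constructor
  · -- Part 1
    intro k g hg
    constructor
    · -- x shares a level with some a
      rintro ⟨a, ha⟩
      constructor
      · intro v
        obtain ⟨q, hq⟩ := hg.1 v
        by_cases hqx : q = x
        · exact ⟨a, by show g a.1 = v; rw [ha, ← hqx]; exact hq⟩
        · exact ⟨⟨q, hqx⟩, hq⟩
      · intro a b hab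
        exact hg.2 _ _ hab
    · -- x alone on its level
      intro hne
      set c : ℕ := (g x : ℕ) with hc
      have hck : c < k := (g x).isLt
      refine ⟨fun a => ⟨if (g a.1 : ℕ) < c then (g a.1 : ℕ) else (g a.1 : ℕ) - 1, ?_⟩,
        ⟨?_, ?_⟩, ?_⟩
      · have h1 : (g a.1 : ℕ) < k := (g a.1).isLt
        have h2 : (g a.1 : ℕ) ≠ c := fun h => hne a (Fin.ext h)
        split_ifs <;> omega
      · -- surjective
        intro v
        have hv : (v : ℕ) < k - 1 := v.isLt
        by_cases hvc : (v : ℕ) < c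
        · obtain ⟨q, hq⟩ := hg.1 ⟨(v : ℕ), by omega⟩
          have hqv : (g q : ℕ) = (v : ℕ) := by rw [hq]
          have hqx : q ≠ x := by intro h; rw [h] at hqv; omega
          refine ⟨⟨q, hqx⟩, Fin.ext ?_⟩
          simp only [Fin.val_mk]
          rw [if_pos (by omega : (g q : ℕ) < c)]
          exact hqv
        · obtain ⟨q, hq⟩ := hg.1 ⟨(v : ℕ) + 1, by omega⟩
          have hqv : (g q : ℕ) = (v : ℕ) + 1 := by rw [hq]
          have hqx : q ≠ x := by intro h; rw [h] at hqv; omega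
          refine ⟨⟨q, hqx⟩, Fin.ext ?_⟩
          simp only [Fin.val_mk]
          rw [if_neg (by omega : ¬ (g q : ℕ) < c)]
          omega
      · -- strict mono
        intro a b hab
        have h1 : (g a.1 : ℕ) < (g b.1 : ℕ) := hg.2 _ _ hab
        have h2 : (g a.1 : ℕ) ≠ c := fun h => hne a (Fin.ext h)
        have h3 : (g b.1 : ℕ) ≠ c := fun h => hne b (Fin.ext h)
        simp only [Fin.lt_def, Fin.val_mk]
        split_ifs <;> omega
      · intro a; rfl
  · -- Part 2
    intro k f hf
    set p : ℕ := (f ⟨y, hxy.ne⟩ : ℕ) with hp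
    have hpk : p < k := (f ⟨y, hxy.ne⟩).isLt
    -- monotone fact: anything ≤ y has f-value ≤ p
    have hley : ∀ (z : Q) (hz : z ≠ x), z ≤ y → (f ⟨z, hz⟩ : ℕ) ≤ p := by
      intro z hz hzy
      rcases hzy.lt_or_eq with h | h
      · exact le_of_lt (hf.2 ⟨z, hz⟩ ⟨y, hxy.ne⟩ (Subtype.mk_lt_mk.2 h))
      · subst h; exact le_of_eq rfl
    constructor
    · -- k-linearizations restricting to f
      have key1 : ∀ v : Fin k, p < (v : ℕ) → IsLinearization (glueFun x f v) := by
        intro v hv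
        constructor
        · intro w
          obtain ⟨a, ha⟩ := hf.1 w
          exact ⟨a.1, by rw [glueFun_ne x f v a.2, Subtype.coe_eta]; exact ha⟩
        · intro z w hzw
          by_cases hwx : w = x
          · have hzltx : z < x := hwx ▸ hzw
            have hzx : z ≠ x := ne_of_lt hzltx
            have hzy := hley z hzx ((hbelow z).1 hzltx)
            rw [hwx, glueFun_x, glueFun_ne x f v hzx, Fin.lt_def]
            omega
          · by_cases hzx : z = x
            · rw [hzx] at hzw; exact absurd hzw (hmax w)
            · rw [glueFun_ne x f v hzx, glueFun_ne x f v hwx]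
              exact hf.2 ⟨z, hzx⟩ ⟨w, hwx⟩ (Subtype.mk_lt_mk.2 hzw)
      have e : {g : Q → Fin k // IsLinearization g ∧ ∀ a : {z : Q // z ≠ x}, g a.1 = f a} ≃
          {v : Fin k // p < (v : ℕ)} :=
        { toFun := fun g => ⟨g.1 x, by
            have h1 : g.1 y < g.1 x := g.2.1.2 y x hxy
            have h2 : g.1 y = f ⟨y, hxy.ne⟩ := g.2.2 ⟨y, hxy.ne⟩
            rw [hp, ← h2]; exact h1⟩
          invFun := fun v => ⟨glueFun x f v.1, key1 v.1 v.2,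
            fun a => by rw [glueFun_ne x f v.1 a.2, Subtype.coe_eta]⟩
          left_inv := fun g => by
            apply Subtype.ext
            funext z
            show glueFun x f (g.1 x) z = g.1 z
            by_cases h : z = x
            · rw [h, glueFun_x]
            · rw [glueFun_ne x f _ h]
              exact (g.2.2 ⟨z, h⟩).symm
          right_inv := fun v => by apply Subtype.ext; exact glueFun_x x f v.1 }
      rw [Nat.card_congr e, card_fin_gt]
    · -- (k+1)-linearizations with x alone, collapsing to f
      have key2 : ∀ v : Fin (k + 1), p < (v : ℕ) →
          IsLinearization (expandFun x f v) ∧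
          (∀ a : {z : Q // z ≠ x}, expandFun x f v a.1 ≠ expandFun x f v x) ∧
          ∀ a : {z : Q // z ≠ x},
            (f a : ℕ) = if (expandFun x f v a.1 : ℕ) < (expandFun x f v x : ℕ)
              then (expandFun x f v a.1 : ℕ) else (expandFun x f v a.1 : ℕ) - 1 := by
        intro v hv
        have hgx : (expandFun x f v x : ℕ) = (v : ℕ) := by rw [expandFun_x]
        refine ⟨⟨?_, ?_⟩, ?_, ?_⟩
        · -- surjective
          intro w
          have hw : (w : ℕ) < k + 1 := w.isLt
          have hvk : (v : ℕ) < k + 1 := v.isLt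
          rcases lt_trichotomy ((w : ℕ)) ((v : ℕ)) with h | h | h
          · obtain ⟨⟨a, hax⟩, ha⟩ := hf.1 ⟨(w : ℕ), by omega⟩
            have hav : (f ⟨a, hax⟩ : ℕ) = (w : ℕ) := by rw [ha]
            refine ⟨a, Fin.ext ?_⟩
            rw [expandFun_val x f v hax, if_pos (by omega)]
            exact hav
          · exact ⟨x, by rw [expandFun_x]; exact Fin.ext h.symm⟩
          · obtain ⟨⟨a, hax⟩, ha⟩ := hf.1 ⟨(w : ℕ) - 1, by omega⟩
            have hav : (f ⟨a, hax⟩ : ℕ) = (w : ℕ) - 1 := by rw [ha]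
            refine ⟨a, Fin.ext ?_⟩
            rw [expandFun_val x f v hax, if_neg (by omega)]
            omega
        · -- strict mono
          intro z w hzw
          rw [Fin.lt_def]
          by_cases hwx : w = x
          · have hzltx : z < x := hwx ▸ hzw
            have hzx : z ≠ x := ne_of_lt hzltx
            have hzy := hley z hzx ((hbelow z).1 hzltx)
            rw [hwx, hgx, expandFun_val x f v hzx]
            split_ifs <;> omega
          · by_cases hzx : z = x
            · rw [hzx] at hzw; exact absurd hzw (hmax w)
            · have hlt : (f ⟨z, hzx⟩ : ℕ) < (f ⟨w, hwx⟩ : ℕ) :=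
                hf.2 ⟨z, hzx⟩ ⟨w, hwx⟩ (Subtype.mk_lt_mk.2 hzw)
              rw [expandFun_val x f v hzx, expandFun_val x f v hwx]
              split_ifs <;> omega
        · -- x alone on its level
          intro a heq
          have h1 := expandFun_val x f v a.2
          rw [Subtype.coe_eta] at h1
          have h2 : (expandFun x f v a.1 : ℕ) = (v : ℕ) := by rw [heq, expandFun_x]
          rw [h1] at h2
          split_ifs at h2 <;> omega
        · -- collapse condition
          intro a
          have h1 := expandFun_val x f v a.2
          rw [Subtype.coe_eta] at h1
          rw [hgx, h1]
          have := (f a).isLt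
          split_ifs <;> omega
      have e : {g : Q → Fin (k + 1) // IsLinearization g ∧
          (∀ a : {z : Q // z ≠ x}, g a.1 ≠ g x) ∧
          ∀ a : {z : Q // z ≠ x},
            (f a : ℕ) = if (g a.1 : ℕ) < (g x : ℕ) then (g a.1 : ℕ) else (g a.1 : ℕ) - 1} ≃
          {v : Fin (k + 1) // p < (v : ℕ)} :=
        { toFun := fun g => ⟨g.1 x, by
            have h1 : (g.1 y : ℕ) < (g.1 x : ℕ) := g.2.1.2 y x hxy
            have h2 : (f ⟨y, hxy.ne⟩ : ℕ) =
                if (g.1 y : ℕ) < (g.1 x : ℕ) then (g.1 y : ℕ) else (g.1 y : ℕ) - 1 :=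
              g.2.2.2 ⟨y, hxy.ne⟩
            rw [if_pos h1] at h2
            rw [hp]; omega⟩
          invFun := fun v => ⟨expandFun x f v.1, key2 v.1 v.2⟩
          left_inv := fun g => by
            apply Subtype.ext
            funext z
            show expandFun x f (g.1 x) z = g.1 z
            by_cases h : z = x
            · rw [h, expandFun_x]
            · have hcol : (f ⟨z, h⟩ : ℕ) =
                  if (g.1 z : ℕ) < (g.1 x : ℕ) then (g.1 z : ℕ) else (g.1 z : ℕ) - 1 :=
                g.2.2.2 ⟨z, h⟩
              have hne : g.1 z ≠ g.1 x := g.2.2.1 ⟨z, h⟩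
              have hne' : (g.1 z : ℕ) ≠ (g.1 x : ℕ) := fun hh => hne (Fin.ext hh)
              apply Fin.ext
              rw [expandFun_val x f (g.1 x) h]
              split_ifs at hcol ⊢ <;> omega
          right_inv := fun v => by apply Subtype.ext; exact expandFun_x x f v.1 }
      rw [Nat.card_congr e, card_fin_gt]
      omega
end

section
/- Let S(V) be a coalgebra that is a polynomial (symmetric) coalgebra on V with the unshuffle coproduct, equipped with an associative product ∗ with unit 1 ∈ S^0(V) making it a bialgebra, such that S^n(V) ∗ S^m(V) ⊆ ⊕_{i ≥ 2} S^i(V) for all n ≥ 2. Let π: V ⊗ V → V be the component of ∗ restricted to V ⊗ V landing in V. Then π satisfies the pre-Lie identity: π(π(a⊗b)⊗c) − π(a⊗π(b⊗c)) = π(π(a⊗c)⊗b) − π(a⊗π(c⊗b)) for all a,b,c ∈ V. -/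
open TensorProduct MvPolynomial

/-- The unshuffle coproduct on the polynomial (symmetric) coalgebra `S(V) = K[X_i]`:
the algebra map (for the polynomial product) determined by making each variable primitive. -/
noncomputable def unshuffle (K : Type*) (σ : Type*) [CommRing K] :
    MvPolynomial σ K →ₐ[K] MvPolynomial σ K ⊗[K] MvPolynomial σ K :=
  MvPolynomial.aeval (fun i : σ =>
    (X i ⊗ₜ[K] 1 + 1 ⊗ₜ[K] X i : MvPolynomial σ K ⊗[K] MvPolynomial σ K))

/-- The counit of the polynomial coalgebra: the projection on `S^0(V) = K`. -/
noncomputable def polyCounit (K : Type*) (σ : Type*) [CommRing K] :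
    MvPolynomial σ K →ₐ[K] K :=
  MvPolynomial.aeval (fun _ : σ => (0 : K))

/-!
Write `[x]₁` for the degree-one component, so `π(a,b) = [a ∗ b]₁`. The counit shows that `a ∗ b`
has no constant term for `a ∈ V`, so right-handedness gives `π(π(a,b),c) = [(a ∗ b) ∗ c]₁`, and
by associativity the associator of `π` is `[a ∗ (b ∗ c - π(b,c))]₁`. The element `b ∗ c - c ∗ b`
is primitive for the unshuffle coproduct, and in characteristic zero primitive elements of `S(V)`
lie in `V`: the composite `μ ∘ Δ` multiplies `Sⁿ(V)` by `2ⁿ`, while on a primitive element it is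
multiplication by `2`. Hence `b ∗ c - π(b,c) = c ∗ b - π(c,b)`, and the associator is symmetric
in `b, c`.
-/

section Coalgebra

variable {K σ : Type*} [CommRing K]

theorem polyCounit_apply (p : MvPolynomial σ K) : polyCounit K σ p = constantCoeff p := by
  rw [polyCounit, aeval_eq_eval, eval_zero']

theorem unshuffle_of_mem_homogeneousSubmodule_one {x : MvPolynomial σ K}
    (hx : x ∈ homogeneousSubmodule σ K 1) : unshuffle K σ x = x ⊗ₜ[K] 1 + 1 ⊗ₜ[K] x := by
  rw [homogeneousSubmodule_one_eq_span_X] at hx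
  induction hx using Submodule.span_induction with
  | mem _ h =>
    obtain ⟨i, rfl⟩ := h
    exact aeval_X _ i
  | zero => simp
  | add x y _ _ hx hy => rw [map_add, hx, hy, add_tmul, tmul_add]; abel
  | smul c x _ hx => rw [map_smul, hx, smul_add, smul_tmul', tmul_smul]

theorem lmul'_comp_unshuffle :
    (Algebra.TensorProduct.lmul' K).comp (unshuffle K σ) =
      aeval fun i => (2 : K) • (X i : MvPolynomial σ K) := by
  refine algHom_ext fun i => ?_
  rw [AlgHom.comp_apply, unshuffle, aeval_X, aeval_X, map_add,
    Algebra.TensorProduct.lmul'_apply_tmul, Algebra.TensorProduct.lmul'_apply_tmul, mul_one,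
    one_mul, two_smul]

theorem aeval_smul_X_monomial (c : K) (d : σ →₀ ℕ) (a : K) :
    aeval (fun i => c • (X i : MvPolynomial σ K)) (monomial d a) = c ^ d.degree • monomial d a := by
  have hpow : (d.prod fun _ k => C c ^ k) = (C (c ^ d.degree) : MvPolynomial σ K) := by
    rw [Finsupp.prod, Finset.prod_pow_eq_pow_sum, map_pow, Finsupp.degree_apply]
  simp only [aeval_monomial, smul_eq_C_mul, mul_pow]
  rw [Finsupp.prod_mul, hpow, monomial_eq, algebraMap_eq]
  ring

theorem coeff_aeval_smul_X (c : K) (p : MvPolynomial σ K) (d : σ →₀ ℕ) :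
    coeff d (aeval (fun i => c • (X i : MvPolynomial σ K)) p) = c ^ d.degree * coeff d p := by
  classical
  induction p using MvPolynomial.induction_on' with
  | monomial d' a =>
    rw [aeval_smul_X_monomial, coeff_smul, coeff_monomial, smul_eq_mul]
    split_ifs with h
    · rw [h]
    · simp
  | add p q hp hq => rw [map_add, coeff_add, coeff_add, hp, hq, mul_add]

theorem homogeneousComponent_one_eq_self_of_unshuffle_eq [IsDomain K] [CharZero K]
    {x : MvPolynomial σ K} (hx : unshuffle K σ x = x ⊗ₜ[K] 1 + 1 ⊗ₜ[K] x) :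
    homogeneousComponent 1 x = x := by
  have hdouble : aeval (fun i => (2 : K) • (X i : MvPolynomial σ K)) x = x + x := by
    rw [← lmul'_comp_unshuffle, AlgHom.comp_apply, hx, map_add,
      Algebra.TensorProduct.lmul'_apply_tmul, Algebra.TensorProduct.lmul'_apply_tmul, mul_one,
      one_mul]
  ext d
  rw [coeff_homogeneousComponent]
  split_ifs with hd
  · rfl
  have hcoeff := congrArg (coeff d) hdouble
  rw [coeff_aeval_smul_X, coeff_add, ← two_mul] at hcoeff
  have hpow : (2 : K) ^ d.degree ≠ 2 := fun h =>
    hd (Nat.pow_right_injective le_rfl (by exact_mod_cast h : 2 ^ d.degree = 2 ^ 1))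
  have hzero : ((2 : K) ^ d.degree - 2) * coeff d x = 0 := by rw [sub_mul, hcoeff, sub_self]
  exact ((mul_eq_zero.mp hzero).resolve_left (sub_ne_zero.mpr hpow)).symm

end Coalgebra

section RightHanded

variable {K σ : Type*} [CommRing K]
  {m : MvPolynomial σ K →ₗ[K] MvPolynomial σ K →ₗ[K] MvPolynomial σ K}

theorem homogeneousComponent_zero_apply_of_mem_one
    (hcounit : ∀ x y : MvPolynomial σ K,
      polyCounit K σ (m x y) = polyCounit K σ x * polyCounit K σ y)
    {x : MvPolynomial σ K} (hx : x ∈ homogeneousSubmodule σ K 1) (y : MvPolynomial σ K) :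
    homogeneousComponent 0 (m x y) = 0 := by
  have hx0 : constantCoeff x = 0 := IsHomogeneous.coeff_eq_zero hx (d := 0) (by simp)
  rw [homogeneousComponent_zero, ← constantCoeff_eq, ← polyCounit_apply, hcounit,
    polyCounit_apply, hx0, zero_mul, map_zero]

theorem homogeneousComponent_one_apply_eq_zero
    (hrh : ∀ (n k : ℕ) (x y : MvPolynomial σ K), 2 ≤ n →
      x ∈ homogeneousSubmodule σ K n → y ∈ homogeneousSubmodule σ K k →
      homogeneousComponent 1 (m x y) = 0)
    {y z : MvPolynomial σ K} {k : ℕ} (hz : z ∈ homogeneousSubmodule σ K k)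
    (h0 : homogeneousComponent 0 y = 0) (h1 : homogeneousComponent 1 y = 0) :
    homogeneousComponent 1 (m y z) = 0 := by
  rw [← sum_homogeneousComponent y, map_sum, LinearMap.sum_apply, map_sum]
  refine Finset.sum_eq_zero fun i _ => ?_
  match i with
  | 0 => rw [h0, map_zero, LinearMap.zero_apply, map_zero]
  | 1 => rw [h1, map_zero, LinearMap.zero_apply, map_zero]
  | n + 2 => exact hrh (n + 2) k _ z (by omega) (homogeneousComponent_mem _ y) hz

theorem homogeneousComponent_one_apply_homogeneousComponent_one
    (hrh : ∀ (n k : ℕ) (x y : MvPolynomial σ K), 2 ≤ n →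
      x ∈ homogeneousSubmodule σ K n → y ∈ homogeneousSubmodule σ K k →
      homogeneousComponent 1 (m x y) = 0)
    {w z : MvPolynomial σ K} {k : ℕ} (hz : z ∈ homogeneousSubmodule σ K k)
    (hw : homogeneousComponent 0 w = 0) :
    homogeneousComponent 1 (m (homogeneousComponent 1 w) z) = homogeneousComponent 1 (m w z) := by
  have hw₁ := homogeneousComponent_of_mem (homogeneousComponent_mem 1 w) (m := 0)
  have hw₂ := homogeneousComponent_of_mem (homogeneousComponent_mem 1 w) (m := 1)
  have h := homogeneousComponent_one_apply_eq_zero hrh hz (y := w - homogeneousComponent 1 w)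
    (by rw [map_sub, hw, hw₁, if_neg zero_ne_one, sub_zero])
    (by rw [map_sub, hw₂, if_pos rfl, sub_self])
  rwa [map_sub, LinearMap.sub_apply, map_sub, sub_eq_zero, eq_comm] at h

theorem unshuffle_apply_of_mem_one
    (hone : ∀ x : MvPolynomial σ K, m 1 x = x ∧ m x 1 = x)
    (hcomul : ∀ x y : MvPolynomial σ K,
      unshuffle K σ (m x y) =
        TensorProduct.map (TensorProduct.lift m) (TensorProduct.lift m)
          (TensorProduct.tensorTensorTensorComm K (MvPolynomial σ K) (MvPolynomial σ K)
              (MvPolynomial σ K) (MvPolynomial σ K)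
            (unshuffle K σ x ⊗ₜ[K] unshuffle K σ y)))
    {y z : MvPolynomial σ K} (hy : y ∈ homogeneousSubmodule σ K 1)
    (hz : z ∈ homogeneousSubmodule σ K 1) :
    unshuffle K σ (m y z) = m y z ⊗ₜ[K] 1 + 1 ⊗ₜ[K] m y z + y ⊗ₜ[K] z + z ⊗ₜ[K] y := by
  rw [hcomul, unshuffle_of_mem_homogeneousSubmodule_one hy,
    unshuffle_of_mem_homogeneousSubmodule_one hz]
  simp only [tmul_add, add_tmul, map_add, tensorTensorTensorComm_tmul, map_tmul, lift.tmul,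
    (hone _).1, (hone _).2]
  abel

theorem sub_homogeneousComponent_one_apply_comm [IsDomain K] [CharZero K]
    (hone : ∀ x : MvPolynomial σ K, m 1 x = x ∧ m x 1 = x)
    (hcomul : ∀ x y : MvPolynomial σ K,
      unshuffle K σ (m x y) =
        TensorProduct.map (TensorProduct.lift m) (TensorProduct.lift m)
          (TensorProduct.tensorTensorTensorComm K (MvPolynomial σ K) (MvPolynomial σ K)
              (MvPolynomial σ K) (MvPolynomial σ K)
            (unshuffle K σ x ⊗ₜ[K] unshuffle K σ y)))
    {y z : MvPolynomial σ K} (hy : y ∈ homogeneousSubmodule σ K 1)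
    (hz : z ∈ homogeneousSubmodule σ K 1) :
    m y z - homogeneousComponent 1 (m y z) = m z y - homogeneousComponent 1 (m z y) := by
  have hprim : unshuffle K σ (m y z - m z y) =
      (m y z - m z y) ⊗ₜ[K] 1 + 1 ⊗ₜ[K] (m y z - m z y) := by
    rw [map_sub, unshuffle_apply_of_mem_one hone hcomul hy hz,
      unshuffle_apply_of_mem_one hone hcomul hz hy, sub_tmul, tmul_sub]
    abel
  have hlin := homogeneousComponent_one_eq_self_of_unshuffle_eq hprim
  rw [map_sub] at hlin
  linear_combination -hlin

end RightHanded

/-- Let `S(V)` (realized as the symmetric coalgebra `K[X_i]` with the unshuffle coproduct,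
`V` being the degree-one part) be equipped with an associative unital product `∗ = m` making
it a bialgebra, which is right-handed: `Sⁿ(V) ∗ Sᵐ(V) ⊆ ⊕_{i ≥ 2} Sⁱ(V)` for `n ≥ 2`.
Then the component `π : V ⊗ V → V` of `∗` (here `π(a⊗b)` is the degree-one homogeneous
component of `m a b`) satisfies the pre-Lie identity. -/
theorem rightHanded_gives_preLie {K σ : Type*} [Field K] [CharZero K]
    (m : MvPolynomial σ K →ₗ[K] MvPolynomial σ K →ₗ[K] MvPolynomial σ K)
    (hone : ∀ x : MvPolynomial σ K, m 1 x = x ∧ m x 1 = x)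
    (hassoc : ∀ x y z : MvPolynomial σ K, m (m x y) z = m x (m y z))
    (hcomul : ∀ x y : MvPolynomial σ K,
      unshuffle K σ (m x y) =
        TensorProduct.map (TensorProduct.lift m) (TensorProduct.lift m)
          (TensorProduct.tensorTensorTensorComm K (MvPolynomial σ K) (MvPolynomial σ K)
              (MvPolynomial σ K) (MvPolynomial σ K)
            (unshuffle K σ x ⊗ₜ[K] unshuffle K σ y)))
    (hcounit : ∀ x y : MvPolynomial σ K,
      polyCounit K σ (m x y) = polyCounit K σ x * polyCounit K σ y)
    (hrh : ∀ (n k : ℕ) (x y : MvPolynomial σ K), 2 ≤ n →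
      x ∈ homogeneousSubmodule σ K n → y ∈ homogeneousSubmodule σ K k →
      homogeneousComponent 0 (m x y) = 0 ∧ homogeneousComponent 1 (m x y) = 0) :
    ∀ a b c : MvPolynomial σ K,
      a ∈ homogeneousSubmodule σ K 1 → b ∈ homogeneousSubmodule σ K 1 →
      c ∈ homogeneousSubmodule σ K 1 →
      homogeneousComponent 1 (m (homogeneousComponent 1 (m a b)) c) -
          homogeneousComponent 1 (m a (homogeneousComponent 1 (m b c))) =
        homogeneousComponent 1 (m (homogeneousComponent 1 (m a c)) b) -
          homogeneousComponent 1 (m a (homogeneousComponent 1 (m c b))) := by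
  intro a b c ha hb hc
  have hrh₁ := fun n k x y hn hx hy => (hrh n k x y hn hx hy).2
  rw [homogeneousComponent_one_apply_homogeneousComponent_one hrh₁ hc
      (homogeneousComponent_zero_apply_of_mem_one hcounit ha b),
    homogeneousComponent_one_apply_homogeneousComponent_one hrh₁ hb
      (homogeneousComponent_zero_apply_of_mem_one hcounit ha c),
    hassoc, hassoc, ← map_sub, ← map_sub (m a), ← map_sub, ← map_sub (m a),
    sub_homogeneousComponent_one_apply_comm hone hcomul hb hc]
end

section
/- Let S(V) be a right-handed polynomial Hopf algebra, i.e., the polynomial algebra on V with a coproduct Δ making it a Hopf algebra such that the reduced coproduct satisfies Δ̄(V) ⊆ V ⊗ S(V). Then the composition of Δ̄ restricted to V with the projection S(V) → V, giving a map δ: V → V ⊗ V, defines a pre-Lie coalgebra structure on V; that is, the co-pre-Lie identity (δ⊗id)∘δ − (id⊗δ)∘δ = (id⊗τ)∘((δ⊗id)∘δ − (id⊗δ)∘δ) holds, where τ swaps the last two tensor factors. -/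
/-!
Write `π` for the projection `S(V) → V`, `ε` for the counit and `ι : V → S(V)` for the inclusion.
Since `π (u * w) = ε u • π w + ε w • π u` and `Δ` is multiplicative and counital,
`δ = (π ⊗ π) ∘ Δ` satisfies `δ (p * q) = ε p • δ q + ε q • δ p + π q ⊗ π p + π p ⊗ π q`.
Hence `δ ∘ (id - π)` vanishes on constants and sends `p * X i` to the symmetric tensor
`X i ⊗ π p + π p ⊗ X i`, so all its values are symmetric.

For `v ∈ V`, right-handedness writes `Δ v = v ⊗ 1 + 1 ⊗ v + (ι ⊗ id) y`. Applying `π ⊗ π ⊗ π` to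
coassociativity gives `(δ ⊗ id) (δ v) = (ι ⊗ δ) y` up to reassociation, while
`(id ⊗ δ) (δ v) = (ι ⊗ δ ∘ π) y`. So the defect is `(ι ⊗ δ ∘ (id - π)) y`, which is symmetric in
its last two factors.
-/

open TensorProduct MvPolynomial

set_option maxSynthPendingDepth 3
set_option synthInstance.maxHeartbeats 1000000

variable {K σ : Type*} [Field K] [CharZero K]

/-- The reduced coproduct `Δ̄ : x ↦ Δ(x) − x⊗1 − 1⊗x` associated to a coproduct `Δ`
on the polynomial algebra `S(V) = K[X_i]`. -/
noncomputable def redCoproduct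
    (Δ : MvPolynomial σ K →ₐ[K] MvPolynomial σ K ⊗[K] MvPolynomial σ K) :
    MvPolynomial σ K →ₗ[K] MvPolynomial σ K ⊗[K] MvPolynomial σ K :=
  Δ.toLinearMap - (TensorProduct.mk K (MvPolynomial σ K) (MvPolynomial σ K)).flip 1 -
    TensorProduct.mk K (MvPolynomial σ K) (MvPolynomial σ K) 1

/-- The map `δ : V → V ⊗ V`, composition of the reduced coproduct with the projection
`S(V) → V` (the degree-one homogeneous component) in both factors. -/
noncomputable def copreLie
    (Δ : MvPolynomial σ K →ₐ[K] MvPolynomial σ K ⊗[K] MvPolynomial σ K) :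
    MvPolynomial σ K →ₗ[K] MvPolynomial σ K ⊗[K] MvPolynomial σ K :=
  TensorProduct.map (homogeneousComponent 1) (homogeneousComponent 1) ∘ₗ redCoproduct Δ

/-- The co-pre-Lie defect `(δ⊗id)∘δ − (id⊗δ)∘δ` (with the first term reassociated). -/
noncomputable def copreLieDefect
    (Δ : MvPolynomial σ K →ₐ[K] MvPolynomial σ K ⊗[K] MvPolynomial σ K) :
    MvPolynomial σ K →ₗ[K] MvPolynomial σ K ⊗[K] (MvPolynomial σ K ⊗[K] MvPolynomial σ K) :=
  ((TensorProduct.assoc K (MvPolynomial σ K) (MvPolynomial σ K)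
        (MvPolynomial σ K)).toLinearMap ∘ₗ
      TensorProduct.map (copreLie Δ)
        (LinearMap.id : MvPolynomial σ K →ₗ[K] MvPolynomial σ K) ∘ₗ copreLie Δ) -
    (TensorProduct.map (LinearMap.id : MvPolynomial σ K →ₗ[K] MvPolynomial σ K)
        (copreLie Δ) ∘ₗ copreLie Δ)

theorem TensorProduct.map_sub_right {R M N P Q : Type*} [CommRing R] [AddCommGroup M]
    [AddCommGroup N] [AddCommGroup P] [AddCommGroup Q] [Module R M] [Module R N] [Module R P]
    [Module R Q] (f : M →ₗ[R] P) (g h : N →ₗ[R] Q) :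
    TensorProduct.map f (g - h) = TensorProduct.map f g - TensorProduct.map f h :=
  TensorProduct.ext' fun m n => by simp [tmul_sub]

namespace MvPolynomial

section HomogeneousComponentOne

variable {R σ : Type*} [CommSemiring R]

theorem homogeneousComponent_monomial (n : ℕ) (d : σ →₀ ℕ) (c : R) :
    homogeneousComponent n (monomial d c) = if d.degree = n then monomial d c else 0 := by
  rcases eq_or_ne c 0 with rfl | hc
  · simp
  · exact (homogeneousComponent_of_mem (isHomogeneous_monomial c rfl)).trans (by simp [eq_comm])

theorem homogeneousComponent_one_C (a : R) :
    homogeneousComponent 1 (C a : MvPolynomial σ R) = 0 := by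
  rw [C_apply, homogeneousComponent_monomial]
  simp

theorem homogeneousComponent_one_one : homogeneousComponent 1 (1 : MvPolynomial σ R) = 0 := by
  simpa using homogeneousComponent_one_C (σ := σ) (1 : R)

theorem homogeneousComponent_one_X (i : σ) :
    homogeneousComponent 1 (X i : MvPolynomial σ R) = X i :=
  homogeneousComponent_eq_self (isHomogeneous_X R i)

theorem homogeneousComponent_comp_subtype (n : ℕ) :
    homogeneousComponent n ∘ₗ (homogeneousSubmodule σ R n).subtype =
      (homogeneousSubmodule σ R n).subtype :=
  LinearMap.ext fun u => homogeneousComponent_eq_self u.2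

theorem homogeneousComponent_one_mul (u w : MvPolynomial σ R) :
    homogeneousComponent 1 (u * w) =
      constantCoeff u • homogeneousComponent 1 w + constantCoeff w • homogeneousComponent 1 u := by
  classical
  induction u using MvPolynomial.induction_on' with
  | add p q hp hq => simp only [add_mul, map_add, hp, hq, add_smul, smul_add]; abel
  | monomial a c =>
    induction w using MvPolynomial.induction_on' with
    | add p q hp hq => simp only [mul_add, map_add, hp, hq, smul_add, add_smul]; abel
    | monomial b e =>
      simp only [monomial_mul, homogeneousComponent_monomial, constantCoeff_monomial, map_add]
      rcases eq_or_ne a 0 with rfl | ha <;> rcases eq_or_ne b 0 with rfl | hb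
      · simp
      · simp [smul_monomial]
      · simp [smul_monomial, mul_comm]
      · have : a.degree ≠ 0 := by rwa [Ne, Finsupp.degree_eq_zero_iff]
        have : b.degree ≠ 0 := by rwa [Ne, Finsupp.degree_eq_zero_iff]
        simp [ha, hb]
        omega

end HomogeneousComponentOne

section TensorSquare

variable {R σ : Type*} [CommSemiring R]

local notation "π" => (homogeneousComponent 1 : MvPolynomial σ R →ₗ[R] MvPolynomial σ R)

noncomputable def counitLeft : MvPolynomial σ R ⊗[R] MvPolynomial σ R →ₗ[R] MvPolynomial σ R :=
  (TensorProduct.lid R (MvPolynomial σ R)).toLinearMap ∘ₗ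
    TensorProduct.map (aeval fun _ : σ => (0 : R)).toLinearMap LinearMap.id

noncomputable def counitRight : MvPolynomial σ R ⊗[R] MvPolynomial σ R →ₗ[R] MvPolynomial σ R :=
  (TensorProduct.rid R (MvPolynomial σ R)).toLinearMap ∘ₗ
    TensorProduct.map LinearMap.id (aeval fun _ : σ => (0 : R)).toLinearMap

@[simp]
theorem counitLeft_tmul (a b : MvPolynomial σ R) :
    counitLeft (a ⊗ₜ[R] b) = constantCoeff a • b := by
  simp [counitLeft]

@[simp]
theorem counitRight_tmul (a b : MvPolynomial σ R) :
    counitRight (a ⊗ₜ[R] b) = constantCoeff b • a := by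
  simp [counitRight]

theorem map_homogeneousComponent_one_mul (x y : MvPolynomial σ R ⊗[R] MvPolynomial σ R) :
    TensorProduct.map π π (x * y) =
      constantCoeff (counitLeft x) • TensorProduct.map π π y +
        constantCoeff (counitLeft y) • TensorProduct.map π π x +
        π (counitRight y) ⊗ₜ[R] π (counitLeft x) + π (counitRight x) ⊗ₜ[R] π (counitLeft y) := by
  induction x using TensorProduct.induction_on with
  | zero => simp
  | add x₁ x₂ h₁ h₂ =>
    simp only [add_mul, map_add, h₁, h₂, add_smul, smul_add, tmul_add, add_tmul]
    abel
  | tmul a b =>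
    induction y using TensorProduct.induction_on with
    | zero => simp
    | add y₁ y₂ h₁ h₂ =>
      simp only [mul_add, map_add, h₁, h₂, add_smul, smul_add, tmul_add, add_tmul]
      abel
    | tmul c d =>
      simp only [Algebra.TensorProduct.tmul_mul_tmul, map_tmul, counitLeft_tmul,
        counitRight_tmul, homogeneousComponent_one_mul, map_smul, constantCoeff_smul,
        smul_eq_mul, tmul_add, add_tmul, ← smul_tmul', tmul_smul]
      module

end TensorSquare

end MvPolynomial

section Coproduct

variable {K σ : Type*} [Field K]
  (Δ : MvPolynomial σ K →ₐ[K] MvPolynomial σ K ⊗[K] MvPolynomial σ K)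
  {v : MvPolynomial σ K} {y : homogeneousSubmodule σ K 1 ⊗[K] MvPolynomial σ K}

local notation "π" => (homogeneousComponent 1 : MvPolynomial σ K →ₗ[K] MvPolynomial σ K)
local notation "ι" => Submodule.subtype (homogeneousSubmodule σ K 1)

theorem copreLie_eq_comp : copreLie Δ = TensorProduct.map π π ∘ₗ Δ.toLinearMap := by
  ext x
  simp [copreLie, redCoproduct, homogeneousComponent_one_one]

theorem copreLie_apply (x : MvPolynomial σ K) : copreLie Δ x = TensorProduct.map π π (Δ x) := by
  rw [copreLie_eq_comp]; rfl

theorem copreLie_C (a : K) : copreLie Δ (C a) = 0 := by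
  rw [copreLie_apply, ← algebraMap_eq, AlgHom.commutes, Algebra.TensorProduct.algebraMap_apply,
    map_tmul, homogeneousComponent_one_one, tmul_zero]

theorem copreLie_one : copreLie Δ 1 = 0 := by
  simpa using copreLie_C Δ 1

theorem copreLie_mul (hl : ∀ x, counitLeft (Δ x) = x) (hr : ∀ x, counitRight (Δ x) = x)
    (p q : MvPolynomial σ K) :
    copreLie Δ (p * q) = constantCoeff p • copreLie Δ q + constantCoeff q • copreLie Δ p +
      π q ⊗ₜ[K] π p + π p ⊗ₜ[K] π q := by
  simp only [copreLie_apply, map_mul, map_homogeneousComponent_one_mul, hl, hr]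

theorem comm_copreLie_sub_homogeneousComponent_one (hl : ∀ x, counitLeft (Δ x) = x)
    (hr : ∀ x, counitRight (Δ x) = x) (w : MvPolynomial σ K) :
    TensorProduct.comm K _ _ (copreLie Δ (w - π w)) = copreLie Δ (w - π w) := by
  induction w using MvPolynomial.induction_on with
  | C a => rw [homogeneousComponent_one_C, sub_zero, copreLie_C, map_zero]
  | add p q hp hq => rw [map_add, add_sub_add_comm, map_add, map_add, hp, hq]
  | mul_X p i _ =>
    have hδ : copreLie Δ (p * X i - π (p * X i)) = X i ⊗ₜ[K] π p + π p ⊗ₜ[K] X i := by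
      simp only [map_sub, copreLie_mul Δ hl hr, homogeneousComponent_one_mul,
        homogeneousComponent_one_X, constantCoeff_X, map_smul, zero_smul, add_zero]
      abel
    rw [hδ, map_add, comm_tmul, comm_tmul, add_comm]

theorem redCoproduct_apply (x : MvPolynomial σ K) :
    redCoproduct Δ x = Δ x - x ⊗ₜ[K] 1 - 1 ⊗ₜ[K] x :=
  rfl

theorem copreLie_of_apply_eq
    (hv : Δ v = v ⊗ₜ[K] 1 + 1 ⊗ₜ[K] v + TensorProduct.map ι LinearMap.id y) :
    copreLie Δ v = TensorProduct.map ι π y := by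
  rw [copreLie_apply, hv, map_add, map_add, map_tmul, map_tmul, homogeneousComponent_one_one,
    tmul_zero, zero_tmul, zero_add, zero_add, TensorProduct.map_map,
    homogeneousComponent_comp_subtype, LinearMap.comp_id]

theorem assoc_map_copreLie_comp_subtype
    (hcoassoc : TensorProduct.assoc K _ _ _ (TensorProduct.map Δ.toLinearMap LinearMap.id (Δ v)) =
      TensorProduct.map LinearMap.id Δ.toLinearMap (Δ v))
    (hv : Δ v = v ⊗ₜ[K] 1 + 1 ⊗ₜ[K] v + TensorProduct.map ι LinearMap.id y) :
    TensorProduct.assoc K _ _ _ (TensorProduct.map (copreLie Δ ∘ₗ ι) π y) =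
      TensorProduct.map ι (copreLie Δ) y := by
  have h := congrArg (TensorProduct.map π (TensorProduct.map π π)) hcoassoc
  rw [map_map_assoc, TensorProduct.map_map, TensorProduct.map_map, ← copreLie_eq_comp,
    LinearMap.comp_id, hv] at h
  simpa only [map_add, map_tmul, homogeneousComponent_one_one, copreLie_one, tmul_zero,
    zero_tmul, zero_add, map_zero, TensorProduct.map_map, LinearMap.comp_id, LinearMap.id_comp,
    homogeneousComponent_comp_subtype] using h

theorem copreLieDefect_eq_map
    (hcoassoc : TensorProduct.assoc K _ _ _ (TensorProduct.map Δ.toLinearMap LinearMap.id (Δ v)) =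
      TensorProduct.map LinearMap.id Δ.toLinearMap (Δ v))
    (hv : Δ v = v ⊗ₜ[K] 1 + 1 ⊗ₜ[K] v + TensorProduct.map ι LinearMap.id y) :
    copreLieDefect Δ v = TensorProduct.map ι (copreLie Δ ∘ₗ (LinearMap.id - π)) y := by
  rw [LinearMap.comp_sub, LinearMap.comp_id, TensorProduct.map_sub_right]
  simp only [copreLieDefect, LinearMap.sub_apply, LinearMap.comp_apply, LinearEquiv.coe_coe,
    copreLie_of_apply_eq Δ hv, TensorProduct.map_map, LinearMap.id_comp,
    assoc_map_copreLie_comp_subtype Δ hcoassoc hv]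

end Coproduct

/-- Let `S(V)` be a right-handed polynomial Hopf algebra: the polynomial algebra `K[X_i]`
(with `V` its degree-one part) equipped with a coproduct `Δ` (an algebra morphism, coassociative
and counital with counit the projection onto `S^0(V) = K`) making it a Hopf algebra, such that
the reduced coproduct satisfies `Δ̄(V) ⊆ V ⊗ S(V)`.  Then `δ : V → V ⊗ V` satisfies the
co-pre-Lie identity `(δ⊗id)∘δ − (id⊗δ)∘δ = (id⊗τ)∘((δ⊗id)∘δ − (id⊗δ)∘δ)` on `V`, where `τ`
swaps the last two tensor factors; i.e. `δ` defines a pre-Lie coalgebra structure on `V`. -/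
theorem rightHanded_gives_coPreLie
    (Δ : MvPolynomial σ K →ₐ[K] MvPolynomial σ K ⊗[K] MvPolynomial σ K)
    (hcoassoc : ∀ x : MvPolynomial σ K,
      (TensorProduct.assoc K (MvPolynomial σ K) (MvPolynomial σ K) (MvPolynomial σ K))
          (TensorProduct.map Δ.toLinearMap LinearMap.id (Δ x)) =
        TensorProduct.map LinearMap.id Δ.toLinearMap (Δ x))
    (hcounitl : ∀ x : MvPolynomial σ K,
      (TensorProduct.lid K (MvPolynomial σ K))
        (TensorProduct.map (MvPolynomial.aeval (fun _ : σ => (0 : K))).toLinearMap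
          LinearMap.id (Δ x)) = x)
    (hcounitr : ∀ x : MvPolynomial σ K,
      (TensorProduct.rid K (MvPolynomial σ K))
        (TensorProduct.map LinearMap.id
          (MvPolynomial.aeval (fun _ : σ => (0 : K))).toLinearMap (Δ x)) = x)
    (hrh : ∀ v ∈ homogeneousSubmodule σ K 1,
      redCoproduct Δ v ∈
        LinearMap.range (TensorProduct.map (homogeneousSubmodule σ K 1).subtype
          (LinearMap.id : MvPolynomial σ K →ₗ[K] MvPolynomial σ K))) :
    ∀ v ∈ homogeneousSubmodule σ K 1,
      copreLieDefect Δ v =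
        TensorProduct.map LinearMap.id
          (TensorProduct.comm K (MvPolynomial σ K) (MvPolynomial σ K)).toLinearMap
          (copreLieDefect Δ v) := by
  intro v hv
  obtain ⟨y, hy⟩ := hrh v hv
  have hΔv : Δ v = v ⊗ₜ[K] 1 + 1 ⊗ₜ[K] v +
      TensorProduct.map (homogeneousSubmodule σ K 1).subtype LinearMap.id y := by
    rw [hy, redCoproduct_apply]
    abel
  have hsymm : (TensorProduct.comm K _ _).toLinearMap ∘ₗ
      copreLie Δ ∘ₗ (LinearMap.id - homogeneousComponent 1) =
      copreLie Δ ∘ₗ (LinearMap.id - homogeneousComponent 1) :=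
    LinearMap.ext (comm_copreLie_sub_homogeneousComponent_one Δ hcounitl hcounitr)
  rw [copreLieDefect_eq_map Δ (hcoassoc v) hΔv, TensorProduct.map_map, LinearMap.id_comp, hsymm]
end

section
/- Let T be a finite rooted tree and k ≥ 2. There is a bijection between (k+1)-linearizations f of T and triples (C, g, h) where C is a nonempty corolla cut of T, h is a 2-linearization of C, and g is a k-linearization of the quotient tree T/C with g^{-1}(k) equal to the set T∧C of leaves of T/C coming from minimal elements of C. The bijection sends (C,g,h) to the linearization given by the ordered partition (g^{-1}(1),...,g^{-1}(k−1), h^{-1}(1), h^{-1}(2)). -/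
/-!
A `(k+1)`-linearization `f` is cut at level `k - 1`. The set `C = f⁻¹{k-1, k}` is upward closed,
and everything strictly above one of its elements has value `k`, hence is maximal: `C` is a
corolla cut. On `C`, `f - (k - 1)` is a 2-linearization; on `T/C`, `min f (k - 1)` is a
`k`-linearization whose top level is `C ∩ T/C`, because removing the tops of the height-2
components of `C` leaves no comparable pair inside `C`. Conversely the levels of `g` below
`k - 1` followed by the two levels of `h` form a `(k+1)`-linearization, and the two
constructions are mutually inverse.
-/

open Classical

def CorollaCut {T : Type*} [PartialOrder T] (C : Set T) : Prop :=
  C.Nonempty ∧ (∀ y ∈ C, ∀ x : T, y < x → IsMax x) ∧ (∀ y ∈ C, ∀ x : T, y < x → x ∈ C)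

def cutTop {T : Type*} [PartialOrder T] (C : Set T) : Set T :=
  {z : T | z ∈ C ∧ ∃ y ∈ C, y < z}

def quotSet {T : Type*} [PartialOrder T] (C : Set T) : Set T :=
  {z : T | z ∉ cutTop C}

section

variable {T : Type*} [PartialOrder T] {k : ℕ}

theorem CorollaCut.isUpperSet {C : Set T} (hC : CorollaCut C) : IsUpperSet C :=
  fun _ _ hle hy => hle.eq_or_lt.elim (· ▸ hy) (hC.2.2 _ hy _)

theorem mem_quotSet_of_notMem {C : Set T} {z : T} (hz : z ∉ C) : z ∈ quotSet C :=
  fun hmem => hz hmem.1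

theorem notMem_quotSet_of_lt {C : Set T} {y z : T} (hy : y ∈ C) (hz : z ∈ C) (hyz : y < z) :
    z ∉ quotSet C :=
  fun hq => hq ⟨hz, y, hy, hyz⟩

section Glue

variable (hk : 1 ≤ k) {C : Set T} {h : C → Fin 2} {g : quotSet C → Fin k}

noncomputable def glueLevels (C : Set T) (h : C → Fin 2) (g : quotSet C → Fin k) (z : T) :
    Fin (k + 1) :=
  if hz : z ∈ C then ⟨k - 1 + h ⟨z, hz⟩, by omega⟩
  else ⟨g ⟨z, mem_quotSet_of_notMem hz⟩, by omega⟩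

theorem glueLevels_of_mem {z : T} (hz : z ∈ C) :
    (glueLevels hk C h g z : ℕ) = k - 1 + h ⟨z, hz⟩ := by
  simp [glueLevels, hz]

theorem glueLevels_of_notMem {z : T} (hz : z ∉ C) :
    (glueLevels hk C h g z : ℕ) = g ⟨z, mem_quotSet_of_notMem hz⟩ := by
  simp [glueLevels, hz]

variable (hgC : ∀ z, (g z : ℕ) = k - 1 ↔ (z : T) ∈ C)
include hgC

theorem val_lt_sub_one_of_notMem {z : quotSet C} (hz : (z : T) ∉ C) : (g z : ℕ) < k - 1 := by
  have hne : (g z : ℕ) ≠ k - 1 := fun heq => hz ((hgC z).1 heq)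
  omega

theorem le_glueLevels_iff {z : T} : k - 1 ≤ (glueLevels hk C h g z : ℕ) ↔ z ∈ C := by
  by_cases hz : z ∈ C
  · simp [glueLevels_of_mem hk hz, hz]
  · have := val_lt_sub_one_of_notMem hgC (z := ⟨z, mem_quotSet_of_notMem hz⟩) hz
    exact iff_of_false (by rw [glueLevels_of_notMem hk hz]; omega) hz

theorem min_glueLevels (z : quotSet C) : min (glueLevels hk C h g z : ℕ) (k - 1) = g z := by
  by_cases hz : (z : T) ∈ C
  · rw [(hgC z).2 hz, min_eq_right ((le_glueLevels_iff hk hgC).2 hz)]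
  · rw [glueLevels_of_notMem hk hz, min_eq_left (val_lt_sub_one_of_notMem hgC hz).le]

omit hgC in
theorem glueLevels_sub (z : C) : (glueLevels hk C h g z : ℕ) - (k - 1) = h z := by
  rw [glueLevels_of_mem hk z.2, Nat.add_sub_cancel_left]

theorem isLinearization_glueLevels (hC : IsUpperSet C) (hh : IsLinearization h)
    (hg : IsLinearization g) : IsLinearization (glueLevels hk C h g) := by
  refine ⟨fun j => ?_, fun x y hxy => ?_⟩
  · by_cases hj : (j : ℕ) < k - 1
    · obtain ⟨z, hz⟩ := hg.1 ⟨j, by omega⟩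
      have hzC : (z : T) ∉ C := fun hzC => by
        have := (hgC z).2 hzC
        rw [hz, Fin.val_mk] at this
        omega
      exact ⟨z, Fin.ext (by rw [glueLevels_of_notMem hk hzC, hz])⟩
    · obtain ⟨z, hz⟩ := hh.1 ⟨j - (k - 1), by omega⟩
      exact ⟨z, Fin.ext (by rw [glueLevels_of_mem hk z.2, hz, Fin.val_mk]; omega)⟩
  · rw [Fin.lt_def]
    by_cases hx : x ∈ C
    · have hy : y ∈ C := hC hxy.le hx
      have := hh.2 ⟨x, hx⟩ ⟨y, hy⟩ hxy
      rw [glueLevels_of_mem hk hx, glueLevels_of_mem hk hy]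
      omega
    · have hgx := val_lt_sub_one_of_notMem hgC (z := ⟨x, mem_quotSet_of_notMem hx⟩) hx
      by_cases hy : y ∈ C
      · rw [glueLevels_of_notMem hk hx, glueLevels_of_mem hk hy]
        omega
      · have := hg.2 ⟨x, mem_quotSet_of_notMem hx⟩ ⟨y, mem_quotSet_of_notMem hy⟩ hxy
        rw [glueLevels_of_notMem hk hx, glueLevels_of_notMem hk hy]
        exact this

end Glue

section Split

variable {f : T → Fin (k + 1)}

def upperLevels (f : T → Fin (k + 1)) : Set T := {z | k - 1 ≤ (f z : ℕ)}

def upperPart (f : T → Fin (k + 1)) (z : upperLevels f) : Fin 2 := ⟨f z - (k - 1), by omega⟩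

def lowerPart (hk : 1 ≤ k) (f : T → Fin (k + 1)) (z : quotSet (upperLevels f)) : Fin k :=
  ⟨min (f z) (k - 1), by omega⟩

theorem corollaCut_upperLevels (hf : IsLinearization f) : CorollaCut (upperLevels f) := by
  refine ⟨?_, fun y hy x hyx w hxw => ?_, fun y hy x hyx => ?_⟩
  · obtain ⟨z, hz⟩ := hf.1 (Fin.last k)
    exact ⟨z, by simp [upperLevels, hz]⟩
  · have := hf.2 y x hyx
    rcases hxw.eq_or_lt with rfl | hxw
    · exact le_rfl
    · have := hf.2 x w hxw
      simp only [upperLevels, Set.mem_ofPred_eq, Fin.lt_def] at hy this ‹f y < f x›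
      omega
  · have := hf.2 y x hyx
    simp only [upperLevels, Set.mem_ofPred_eq, Fin.lt_def] at hy this ⊢
    omega

theorem isLinearization_upperPart (hk : 1 ≤ k) (hf : IsLinearization f) :
    IsLinearization (upperPart f) := by
  refine ⟨fun j => ?_, fun x y hxy => ?_⟩
  · obtain ⟨z, hz⟩ := hf.1 ⟨k - 1 + j, by omega⟩
    have hzC : z ∈ upperLevels f := by simp [upperLevels, hz]; omega
    exact ⟨⟨z, hzC⟩, Fin.ext (by simp [upperPart, hz])⟩
  · have := hf.2 x y hxy
    have hx : k - 1 ≤ (f x : ℕ) := x.2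
    simp only [upperPart, Fin.lt_def] at this ⊢
    omega

theorem isLinearization_lowerPart (hk : 1 ≤ k) (hf : IsLinearization f) :
    IsLinearization (lowerPart hk f) := by
  refine ⟨fun j => ?_, fun x y hxy => ?_⟩
  · obtain ⟨z, hz⟩ := hf.1 ⟨j, by omega⟩
    have hzq : z ∈ quotSet (upperLevels f) := fun ⟨_, y, hy, hyz⟩ => by
      have := hf.2 y z hyz
      simp only [upperLevels, Set.mem_ofPred_eq, Fin.lt_def, hz] at hy this
      omega
    exact ⟨⟨z, hzq⟩, Fin.ext (by simp [lowerPart, hz]; omega)⟩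
  · have hfxy := hf.2 x y hxy
    have hx : (x : T) ∉ upperLevels f := fun hx =>
      notMem_quotSet_of_lt hx ((corollaCut_upperLevels hf).isUpperSet hxy.le hx) hxy y.2
    simp only [upperLevels, Set.mem_ofPred_eq, not_le] at hx
    simp only [lowerPart, Fin.lt_def] at hfxy ⊢
    omega

theorem lowerPart_eq_iff (hk : 1 ≤ k) (z : quotSet (upperLevels f)) :
    (lowerPart hk f z : ℕ) = k - 1 ↔ (z : T) ∈ upperLevels f := by
  simp [lowerPart, upperLevels]

theorem glueLevels_upperPart_lowerPart (hk : 1 ≤ k) :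
    glueLevels hk (upperLevels f) (upperPart f) (lowerPart hk f) = f := by
  funext z
  by_cases hz : z ∈ upperLevels f
  · have : k - 1 ≤ (f z : ℕ) := hz
    exact Fin.ext (by rw [glueLevels_of_mem hk hz]; simp only [upperPart]; omega)
  · have : ¬ k - 1 ≤ (f z : ℕ) := hz
    exact Fin.ext (by rw [glueLevels_of_notMem hk hz]; simp only [lowerPart]; omega)

end Split

variable (T) in
def CutTriple (k : ℕ) (hk : 1 ≤ k) : Type _ :=
  (C : {C : Set T // CorollaCut C}) ×
    ({h : C.1 → Fin 2 // IsLinearization h} ×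
      {g : quotSet C.1 → Fin k // IsLinearization g ∧
        ∀ z : quotSet C.1, g z = ⟨k - 1, by omega⟩ ↔ (z : T) ∈ C.1})

namespace CutTriple

variable {hk : 1 ≤ k}

theorem val_eq_iff (p : CutTriple T k hk) (z : quotSet p.1.1) :
    (p.2.2.1 z : ℕ) = k - 1 ↔ (z : T) ∈ p.1.1 :=
  Fin.ext_iff.symm.trans (p.2.2.2.2 z)

noncomputable def glue (p : CutTriple T k hk) : {f : T → Fin (k + 1) // IsLinearization f} :=
  ⟨glueLevels hk p.1.1 p.2.1.1 p.2.2.1,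
    isLinearization_glueLevels hk p.val_eq_iff p.1.2.isUpperSet p.2.1.2 p.2.2.2.1⟩

theorem glue_injective : Function.Injective (glue : CutTriple T k hk → _) := by
  rintro ⟨⟨C₁, hC₁⟩, ⟨h₁, hh₁⟩, ⟨g₁, hg₁⟩⟩ ⟨⟨C₂, hC₂⟩, ⟨h₂, hh₂⟩, ⟨g₂, hg₂⟩⟩ he
  have hval (z : T) : (glueLevels hk C₁ h₁ g₁ z : ℕ) = glueLevels hk C₂ h₂ g₂ z :=
    congrArg (fun f : {f : T → Fin (k + 1) // IsLinearization f} => (f.1 z : ℕ)) he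
  have hgC₁ : ∀ z, (g₁ z : ℕ) = k - 1 ↔ (z : T) ∈ C₁ :=
    val_eq_iff (hk := hk) ⟨⟨C₁, hC₁⟩, ⟨h₁, hh₁⟩, ⟨g₁, hg₁⟩⟩
  have hgC₂ : ∀ z, (g₂ z : ℕ) = k - 1 ↔ (z : T) ∈ C₂ :=
    val_eq_iff (hk := hk) ⟨⟨C₂, hC₂⟩, ⟨h₂, hh₂⟩, ⟨g₂, hg₂⟩⟩
  obtain rfl : C₁ = C₂ := Set.ext fun z => by
    rw [← le_glueLevels_iff hk (h := h₁) hgC₁, hval, le_glueLevels_iff hk hgC₂]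
  obtain rfl : h₁ = h₂ := funext fun z => Fin.ext <| by
    rw [← glueLevels_sub hk (g := g₁), hval, glueLevels_sub hk]
  obtain rfl : g₁ = g₂ := funext fun z => Fin.ext <| by
    rw [← min_glueLevels hk (h := h₁) hgC₁, hval, min_glueLevels hk hgC₂]
  rfl

theorem glue_surjective : Function.Surjective (glue : CutTriple T k hk → _) := fun ⟨f, hf⟩ =>
  ⟨⟨⟨upperLevels f, corollaCut_upperLevels hf⟩, ⟨upperPart f, isLinearization_upperPart hk hf⟩,
    ⟨lowerPart hk f, isLinearization_lowerPart hk hf,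
      fun z => Fin.ext_iff.trans (lowerPart_eq_iff hk z)⟩⟩,
    Subtype.ext (glueLevels_upperPart_lowerPart hk)⟩

end CutTriple

end

/-- Zimmermann-type bijection: for a finite rooted tree `T` and `k ≥ 2`, the
`(k+1)`-linearizations of `T` are in bijection with triples `(C, h, g)` where `C` is a
nonempty corolla cut of `T`, `h` is a 2-linearization of `C`, and `g` is a `k`-linearization
of the quotient tree `T/C` whose top level `g⁻¹(k)` is exactly the set `T∧C` of leaves of
`T/C` coming from minimal elements of `C`.  The bijection sends `(C, g, h)` to the
linearization given by the ordered partition `(g⁻¹(1), …, g⁻¹(k−1), h⁻¹(1), h⁻¹(2))`. -/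
theorem linearizations_corollaCut_bijection {T : Type*} [PartialOrder T]
    (k : ℕ) (hk : 2 ≤ k) :
    ∃ e : ((C : {C : Set T // CorollaCut C}) ×
        ({h : ↥C.1 → Fin 2 // IsLinearization h} ×
          {g : ↥(quotSet C.1) → Fin k // IsLinearization g ∧
            ∀ z : ↥(quotSet C.1), g z = ⟨k - 1, by omega⟩ ↔ (z : T) ∈ C.1})) ≃
        {f : T → Fin (k + 1) // IsLinearization f},
      ∀ p, ∀ z : T,
        (e p : T → Fin (k + 1)) z =
          if hz : z ∈ (p.1.1 : Set T) then
            ⟨k - 1 + ((p.2.1.1 ⟨z, hz⟩ : Fin 2) : ℕ),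
              by have := (p.2.1.1 ⟨z, hz⟩).isLt; omega⟩
          else
            ⟨((p.2.2.1 ⟨z, fun hmem => hz hmem.1⟩ : Fin k) : ℕ),
              by have := (p.2.2.1 ⟨z, fun hmem => hz hmem.1⟩).isLt; omega⟩ :=
  ⟨Equiv.ofBijective (CutTriple.glue (hk := by omega))
      ⟨CutTriple.glue_injective, CutTriple.glue_surjective⟩,
    fun _ _ => rfl⟩
end
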